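/- Let ρ be the 4-qubit state ρ = (1/16) Σ_{i,j=0}^{3} R_{ij} σᵢ ⊗ σⱼ ⊗ σᵢ ⊗ σⱼ with R = (1/9)·[[9,3,3,3],[1,−1,3,−1],[1,−1,3,−1],[1,−1,3,−1]], and let τ_W(p) = p|Ψ⁻⟩⟨Ψ⁻| + (1−p)1₄/4 be the two-qubit Werner state. Then tr[ρ (τ_W(p)ᵀ ⊗ H_{π/4})] = (3 − √2 − (1+√2)p)/12, where τ_W(p)ᵀ acts on qubits 1 and 3 of ρ and H_{π/4} acts on qubits 2 and 4. -/

import Mathlib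

open Matrix Kronecker Real ComplexOrder

noncomputable section

def σx : Matrix (Fin 2) (Fin 2) ℂ := !![0, 1; 1, 0]
def σy : Matrix (Fin 2) (Fin 2) ℂ := !![0, -Complex.I; Complex.I, 0]
def σz : Matrix (Fin 2) (Fin 2) ℂ := !![1, 0; 0, -1]

def pauli : Fin 4 → Matrix (Fin 2) (Fin 2) ℂ := ![1, σx, σy, σz]

def R : Matrix (Fin 4) (Fin 4) ℝ :=
  (9 : ℝ)⁻¹ • !![9, 3, 3, 3; 1, -1, 3, -1; 1, -1, 3, -1; 1, -1, 3, -1]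

/-- The 4-qubit ancillary state `ρ = (1/16) Σ_{i,j} R_{ij} σᵢ⊗σⱼ⊗σᵢ⊗σⱼ`. -/
def ancilla :
    Matrix ((Fin 2 × Fin 2) × (Fin 2 × Fin 2)) ((Fin 2 × Fin 2) × (Fin 2 × Fin 2)) ℂ :=
  (16 : ℂ)⁻¹ • ∑ i : Fin 4, ∑ j : Fin 4,
    (R i j : ℂ) • ((pauli i ⊗ₖ pauli j) ⊗ₖ (pauli i ⊗ₖ pauli j))

/-- Singlet `|Ψ⁻⟩ = (|01⟩ − |10⟩)/√2`. -/
def PsiM : Fin 2 × Fin 2 → ℂ :=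
  fun p => (Real.sqrt 2 : ℂ)⁻¹ *
    (if p = (0, 1) then 1 else if p = (1, 0) then -1 else 0)

/-- Two-qubit Werner state `τ_W(p) = p |Ψ⁻⟩⟨Ψ⁻| + (1−p) 1₄/4`. -/
def wernerState (p : ℝ) : Matrix (Fin 2 × Fin 2) (Fin 2 × Fin 2) ℂ :=
  (p : ℂ) • vecMulVec PsiM (star PsiM) + (((1 - p) / 4 : ℝ) : ℂ) • 1

/-- `H_{π/4} = 1₄ − (1/√2)(σx⊗σx) − (1/√2)(σz⊗σz)`. -/
def Hpi4 : Matrix (Fin 2 × Fin 2) (Fin 2 × Fin 2) ℂ :=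
  1 - (Real.cos (π / 4) : ℂ) • (σx ⊗ₖ σx) - (Real.sin (π / 4) : ℂ) • (σz ⊗ₖ σz)

/-- The observable `τ_W(p)ᵀ ⊗ H_{π/4}`, with `τ_W(p)ᵀ` acting on qubits 1 and 3
of `ρ` (the `σᵢ` factors) and `H_{π/4}` acting on qubits 2 and 4 (the `σⱼ` factors). -/
def obs (p : ℝ) :
    Matrix ((Fin 2 × Fin 2) × (Fin 2 × Fin 2)) ((Fin 2 × Fin 2) × (Fin 2 × Fin 2)) ℂ :=
  fun q r =>
    (wernerState p)ᵀ (q.1.1, q.2.1) (r.1.1, r.2.1) * Hpi4 (q.1.2, q.2.2) (r.1.2, r.2.2)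

/-! Each term `σᵢ ⊗ σⱼ ⊗ σᵢ ⊗ σⱼ` of `ρ` is, after regrouping the qubits as (1,3)(2,4), a
product `(σᵢ ⊗ σᵢ) ⊗ (σⱼ ⊗ σⱼ)`, so the trace against `τ_W(p)ᵀ ⊗ H_{π/4}` factorises into
`(1/16) Σ Rᵢⱼ tr[(σᵢ⊗σᵢ) τ_W(p)ᵀ] tr[(σⱼ⊗σⱼ) H_{π/4}]`. The singlet is anticorrelated in every
Pauli basis, giving the Werner coefficients `(1, -p, -p, -p)`, and `H_{π/4}` has Pauli
coefficients `(4, -2√2, 0, -2√2)`. -/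

namespace Matrix

theorem trace_submatrix_equiv {m n α : Type*} [Fintype m] [Fintype n] [AddCommMonoid α]
    (M : Matrix n n α) (e : m ≃ n) : (M.submatrix e e).trace = M.trace :=
  Fintype.sum_equiv e _ _ fun _ => rfl

theorem kronecker_kronecker_eq_submatrix_prodProdProdComm {m n m' n' p q p' q' α : Type*}
    [CommSemigroup α] (A : Matrix m n α) (B : Matrix m' n' α) (C : Matrix p q α)
    (D : Matrix p' q' α) :
    (A ⊗ₖ B) ⊗ₖ (C ⊗ₖ D) = ((A ⊗ₖ C) ⊗ₖ (B ⊗ₖ D)).submatrix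
      (Equiv.prodProdProdComm m m' p p') (Equiv.prodProdProdComm n n' q q') := by
  ext ⟨⟨_, _⟩, _, _⟩ ⟨⟨_, _⟩, _, _⟩
  simp only [kroneckerMap_apply, submatrix_apply, Equiv.prodProdProdComm_apply]
  exact mul_mul_mul_comm _ _ _ _

theorem trace_kronecker_kronecker_mul_submatrix {m n α : Type*} [Fintype m] [Fintype n]
    [CommSemiring α] (A C : Matrix m m α) (B D : Matrix n n α) (M : Matrix (m × m) (m × m) α)
    (N : Matrix (n × n) (n × n) α) :
    ((A ⊗ₖ B) ⊗ₖ (C ⊗ₖ D) * (M ⊗ₖ N).submatrix (Equiv.prodProdProdComm m n m n)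
      (Equiv.prodProdProdComm m n m n)).trace
      = ((A ⊗ₖ C) * M).trace * ((B ⊗ₖ D) * N).trace := by
  rw [kronecker_kronecker_eq_submatrix_prodProdProdComm, submatrix_mul_equiv,
    trace_submatrix_equiv, ← mul_kronecker_mul, trace_kronecker]

end Matrix

theorem trace_ancilla_mul_submatrix (M N : Matrix (Fin 2 × Fin 2) (Fin 2 × Fin 2) ℂ) :
    (ancilla * (M ⊗ₖ N).submatrix (Equiv.prodProdProdComm _ _ _ _)
      (Equiv.prodProdProdComm _ _ _ _)).trace
      = (16 : ℂ)⁻¹ * ∑ i : Fin 4, ∑ j : Fin 4,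
        (R i j : ℂ) * (((pauli i ⊗ₖ pauli i) * M).trace * ((pauli j ⊗ₖ pauli j) * N).trace) := by
  simp only [ancilla, smul_mul, Finset.sum_mul, trace_smul, trace_sum, smul_eq_mul,
    trace_kronecker_kronecker_mul_submatrix]

theorem trace_pauli_kronecker_self_mul_wernerState_transpose (p : ℝ) (i : Fin 4) :
    ((pauli i ⊗ₖ pauli i) * (wernerState p)ᵀ).trace = ![1, -p, -p, -p] i := by
  have singlet_weight : ((√2 : ℝ) : ℂ)⁻¹ * ((√2 : ℝ) : ℂ)⁻¹ = 2⁻¹ := by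
    rw [← mul_inv, ← Complex.ofReal_mul, Real.mul_self_sqrt zero_le_two, Complex.ofReal_ofNat]
  fin_cases i <;>
  simp [Matrix.trace, Matrix.mul_apply, Fintype.sum_prod_type, wernerState, PsiM, pauli,
    σx, σy, σz, one_apply, vecMulVec_apply, singlet_weight] <;>
  ring

theorem trace_pauli_kronecker_self_mul_Hpi4 (j : Fin 4) :
    ((pauli j ⊗ₖ pauli j) * Hpi4).trace = ![4, -2 * √2, 0, -2 * √2] j := by
  fin_cases j <;>
  simp [Matrix.trace, Matrix.mul_apply, Fintype.sum_prod_type, Hpi4, pauli, σx, σy, σz,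
    one_apply, cos_pi_div_four, sin_pi_div_four]
  all_goals ring

/-- `tr[ρ (τ_W(p)ᵀ ⊗ H_{π/4})] = (3 − √2 − (1+√2)p)/12`. -/
theorem trace_ancilla_werner (p : ℝ) :
    (ancilla * obs p).trace
      = (((3 - Real.sqrt 2 - (1 + Real.sqrt 2) * p) / 12 : ℝ) : ℂ) := by
  have hobs : obs p = ((wernerState p)ᵀ ⊗ₖ Hpi4).submatrix (Equiv.prodProdProdComm _ _ _ _)
      (Equiv.prodProdProdComm _ _ _ _) := rfl
  rw [hobs, trace_ancilla_mul_submatrix]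
  simp [Fin.sum_univ_four, trace_pauli_kronecker_self_mul_wernerState_transpose,
    trace_pauli_kronecker_self_mul_Hpi4, R]
  ring
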